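/- Let $\sigma > 0$, $r \ge 0$, $K \ge 0$, $T > 0$, $\beta \ge \sigma^2/2 + r + 1$ and $\alpha \ge e^{\beta T}$. Define $\bar u(t,s,a) = \frac{\alpha}{t}\left(1 + e^{-\beta t}\sqrt{s^2+a^2}\right)$ and $\varphi(t,s,a) = (a/t - K)^+$. Then $\bar u$ is a super-solution of the obstacle problem for the arithmetic Asian option: for all $t \in (0,T)$ and $s,a > 0$, $$\max\left\{\frac{\sigma^2 s^2}{2}\partial_{ss}\bar u + rs\,\partial_s\bar u + s\,\partial_a\bar u + \partial_t\bar u - r\bar u,\ \varphi(t,s,a) - \bar u(t,s,a)\right\} \le 0,$$ and $\bar u(T,s,a) \ge \varphi(T,s,a)$ for all $s, a > 0$. -/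

import Mathlib

/-- The candidate super-solution
`ū(t,s,a) = (α/t) (1 + e^{-β t} √(s² + a²))`. -/
noncomputable def ubar (α β : ℝ) (t s a : ℝ) : ℝ :=
  α / t * (1 + Real.exp (-β * t) * Real.sqrt (s ^ 2 + a ^ 2))

/-!
With `ρ = √(s² + a²)`, each of `s² ∂ₛₛρ`, `s ∂ₛρ` and `s ∂ₐρ` is at most `ρ`, so the spatial part
of `L` applied to `e^{-βt} ρ` is at most `(σ²/2 + r + 1) e^{-βt} ρ`, which the time derivative
`-β e^{-βt} ρ` absorbs; the factor `α/t` only adds the nonpositive terms `-ū/t - r ū`.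
For the obstacle, `α e^{-βt} ≥ e^{β(T-t)} ≥ 1` gives `ū ≥ a/t`.
-/

open Real

lemma hasDerivAt_sqrt_sq_add {c x : ℝ} (h : 0 < x ^ 2 + c) :
    HasDerivAt (fun z => √(z ^ 2 + c)) (x / √(x ^ 2 + c)) x := by
  have hsq : HasDerivAt (fun z => z ^ 2 + c) (2 * x) x := by
    simpa using (hasDerivAt_pow 2 x).add_const c
  refine (hsq.sqrt h.ne').congr_deriv ?_
  have : √(x ^ 2 + c) ≠ 0 := (sqrt_pos.2 h).ne'
  field_simp

lemma hasDerivAt_div_sqrt_sq_add {c x : ℝ} (h : 0 < x ^ 2 + c) :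
    HasDerivAt (fun z => z / √(z ^ 2 + c)) (c / √(x ^ 2 + c) ^ 3) x := by
  have hρ : 0 < √(x ^ 2 + c) := sqrt_pos.2 h
  refine ((hasDerivAt_id' x).div (hasDerivAt_sqrt_sq_add h) hρ.ne').congr_deriv ?_
  have hρsq : √(x ^ 2 + c) ^ 2 = x ^ 2 + c := sq_sqrt h.le
  field_simp
  linear_combination hρsq

noncomputable def asianOperator (σ r : ℝ) (u : ℝ → ℝ → ℝ → ℝ) (t s a : ℝ) : ℝ :=
  σ ^ 2 * s ^ 2 / 2 * deriv (fun y => deriv (fun z => u t z a) y) s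
    + r * s * deriv (fun z => u t z a) s
    + s * deriv (fun w => u t s w) a
    + deriv (fun τ => u τ s a) t
    - r * u t s a

section ubar

variable {α β t s a : ℝ}

lemma hasDerivAt_ubar_space {f : ℝ → ℝ} {f' x : ℝ} (hf : HasDerivAt f f' x) :
    HasDerivAt (fun x => α / t * (1 + exp (-β * t) * f x)) (α / t * exp (-β * t) * f') x :=
  (((hf.const_mul _).const_add 1).const_mul _).congr_deriv (by ring)

lemma hasDerivAt_ubar_s (h : 0 < s ^ 2 + a ^ 2) :
    HasDerivAt (fun z => ubar α β t z a) (α / t * exp (-β * t) * (s / √(s ^ 2 + a ^ 2))) s :=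
  hasDerivAt_ubar_space (hasDerivAt_sqrt_sq_add h)

lemma hasDerivAt_ubar_a (h : 0 < s ^ 2 + a ^ 2) :
    HasDerivAt (fun w => ubar α β t s w) (α / t * exp (-β * t) * (a / √(s ^ 2 + a ^ 2))) a := by
  simp only [ubar, add_comm (s ^ 2)]
  rw [add_comm (s ^ 2)] at h
  exact hasDerivAt_ubar_space (hasDerivAt_sqrt_sq_add h)

lemma deriv_deriv_ubar_s (ha : a ≠ 0) :
    deriv (fun y => deriv (fun z => ubar α β t z a) y) s
      = α / t * exp (-β * t) * (a ^ 2 / √(s ^ 2 + a ^ 2) ^ 3) := by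
  have h : ∀ y : ℝ, 0 < y ^ 2 + a ^ 2 := fun y => by positivity
  have hd : (fun y => deriv (fun z => ubar α β t z a) y)
      = fun y => α / t * exp (-β * t) * (y / √(y ^ 2 + a ^ 2)) :=
    funext fun y => (hasDerivAt_ubar_s (h y)).deriv
  rw [hd]
  exact ((hasDerivAt_div_sqrt_sq_add (h s)).const_mul _).deriv

lemma hasDerivAt_ubar_t (ht : t ≠ 0) :
    HasDerivAt (fun τ => ubar α β τ s a)
      (-ubar α β t s a / t - β * (α / t * exp (-β * t) * √(s ^ 2 + a ^ 2))) t := by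
  have hinv : HasDerivAt (fun τ => α * τ⁻¹) (-(α / t) / t) t := by
    refine ((hasDerivAt_inv ht).const_mul α).congr_deriv ?_
    ring
  have hexp : HasDerivAt (fun τ => exp (-β * τ)) (-β * exp (-β * t)) t := by
    simpa [mul_comm] using ((hasDerivAt_id t).const_mul (-β)).exp
  refine (hinv.mul ((hexp.mul_const _).const_add 1)).congr_deriv ?_
  simp only [ubar]
  ring

lemma asianOperator_ubar (σ r : ℝ) (ht : t ≠ 0) (ha : a ≠ 0) :
    asianOperator σ r (ubar α β) t s a
      = α / t * exp (-β * t) * (σ ^ 2 / 2 * (s ^ 2 * (a ^ 2 / √(s ^ 2 + a ^ 2) ^ 3))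
          + r * (s * (s / √(s ^ 2 + a ^ 2))) + s * (a / √(s ^ 2 + a ^ 2))
          - β * √(s ^ 2 + a ^ 2))
        - (1 / t + r) * ubar α β t s a := by
  have h : 0 < s ^ 2 + a ^ 2 := by positivity
  rw [asianOperator, deriv_deriv_ubar_s ha, (hasDerivAt_ubar_s h).deriv,
    (hasDerivAt_ubar_a h).deriv, (hasDerivAt_ubar_t ht).deriv]
  ring

end ubar

lemma spatial_operator_sqrt_le {σ r s a : ℝ} (hr : 0 ≤ r) (h : 0 < s ^ 2 + a ^ 2) :
    σ ^ 2 / 2 * (s ^ 2 * (a ^ 2 / √(s ^ 2 + a ^ 2) ^ 3))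
        + r * (s * (s / √(s ^ 2 + a ^ 2))) + s * (a / √(s ^ 2 + a ^ 2))
      ≤ (σ ^ 2 / 2 + r + 1) * √(s ^ 2 + a ^ 2) := by
  set ρ := √(s ^ 2 + a ^ 2)
  have hρ : 0 < ρ := sqrt_pos.2 h
  have hρsq : ρ ^ 2 = s ^ 2 + a ^ 2 := sq_sqrt h.le
  have hdiff : s ^ 2 * (a ^ 2 / ρ ^ 3) ≤ ρ := by
    rw [← mul_div_assoc, div_le_iff₀ (by positivity)]
    nlinarith [sq_nonneg s, sq_nonneg a]
  have hdrift : s * (s / ρ) ≤ ρ := by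
    rw [← mul_div_assoc, div_le_iff₀ hρ]
    nlinarith [sq_nonneg a]
  have hcross : s * (a / ρ) ≤ ρ := by
    rw [← mul_div_assoc, div_le_iff₀ hρ]
    nlinarith [sq_nonneg (s - a)]
  nlinarith [mul_le_mul_of_nonneg_left hdiff (by positivity : 0 ≤ σ ^ 2 / 2),
    mul_le_mul_of_nonneg_left hdrift hr]

lemma ubar_nonneg {α β t s a : ℝ} (hα : 0 ≤ α) (ht : 0 ≤ t) : 0 ≤ ubar α β t s a := by
  unfold ubar
  positivity

lemma asianOperator_ubar_nonpos {σ r α β t s a : ℝ} (hr : 0 ≤ r) (hβ : σ ^ 2 / 2 + r + 1 ≤ β)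
    (hα : 0 ≤ α) (ht : 0 < t) (ha : a ≠ 0) :
    asianOperator σ r (ubar α β) t s a ≤ 0 := by
  have h : 0 < s ^ 2 + a ^ 2 := by positivity
  have hbracket := spatial_operator_sqrt_le (σ := σ) hr h
  have hρ : 0 ≤ √(s ^ 2 + a ^ 2) := sqrt_nonneg _
  rw [asianOperator_ubar σ r ht.ne' ha]
  have hcoeff : 0 ≤ α / t * exp (-β * t) := by positivity
  have hdecay : 0 ≤ (1 / t + r) * ubar α β t s a :=
    mul_nonneg (by positivity) (ubar_nonneg hα ht.le)
  nlinarith [mul_le_mul_of_nonneg_right hβ hρ, mul_le_mul_of_nonneg_left hbracket hcoeff]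

lemma payoff_le_ubar {K T α β t s a : ℝ} (hK : 0 ≤ K) (hβ : 0 ≤ β) (hα : exp (β * T) ≤ α)
    (ht : 0 < t) (htT : t ≤ T) : max (a / t - K) 0 ≤ ubar α β t s a := by
  have hα0 : 0 ≤ α := (exp_pos _).le.trans hα
  refine max_le ?_ (ubar_nonneg hα0 ht.le)
  have hdiscount : 1 ≤ α * exp (-β * t) :=
    calc 1 ≤ exp (β * T) * exp (-β * t) := by
          rw [← exp_add, one_le_exp_iff]; nlinarith
      _ ≤ α * exp (-β * t) := by gcongr
  have ha : a ≤ √(s ^ 2 + a ^ 2) := (le_abs_self a).trans (abs_le_sqrt (by nlinarith [sq_nonneg s]))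
  calc a / t - K ≤ a / t := by linarith
    _ ≤ α * (1 + exp (-β * t) * √(s ^ 2 + a ^ 2)) / t := by
        gcongr; nlinarith [sqrt_nonneg (s ^ 2 + a ^ 2)]
    _ = ubar α β t s a := by rw [ubar]; ring

theorem ubar_supersolution_obstacle_general (σ r K T β α : ℝ)
    (hr : 0 ≤ r) (hK : 0 ≤ K) (hT : 0 < T)
    (hβ : σ ^ 2 / 2 + r + 1 ≤ β) (hα : Real.exp (β * T) ≤ α) :
    (∀ t ∈ Set.Ioo (0 : ℝ) T, ∀ s a : ℝ, 0 < s → 0 < a →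
      max
        (σ ^ 2 * s ^ 2 / 2 *
            deriv (fun y => deriv (fun z => ubar α β t z a) y) s
          + r * s * deriv (fun z => ubar α β t z a) s
          + s * deriv (fun w => ubar α β t s w) a
          + deriv (fun τ => ubar α β τ s a) t
          - r * ubar α β t s a)
        (max (a / t - K) 0 - ubar α β t s a) ≤ 0) ∧
    (∀ s a : ℝ, 0 < s → 0 < a → max (a / T - K) 0 ≤ ubar α β T s a) := by
  have hβ0 : 0 ≤ β := by nlinarith [sq_nonneg σ]
  have hα0 : 0 ≤ α := (exp_pos _).le.trans hα
  refine ⟨fun t ht s a _ ha => max_le ?_ ?_, fun s a _ _ => payoff_le_ubar hK hβ0 hα hT le_rfl⟩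
  · exact asianOperator_ubar_nonpos hr hβ hα0 ht.1 ha.ne'
  · exact sub_nonpos.2 (payoff_le_ubar hK hβ0 hα ht.1 ht.2.le)

/-- For `σ > 0`, `r ≥ 0`, `K ≥ 0`, `T > 0`, `β ≥ σ²/2 + r + 1` and
`α ≥ e^{β T}`, the function `ū(t,s,a) = (α/t)(1 + e^{-β t}√(s²+a²))` is a
super-solution of the obstacle problem for the arithmetic Asian option with
fixed-strike payoff `φ(t,s,a) = (a/t - K)⁺`:
`max {L ū, φ - ū} ≤ 0` on `(0,T) × ℝ²₊` and `ū(T,·) ≥ φ(T,·)` on `ℝ²₊`. -/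
theorem ubar_supersolution_obstacle (σ r K T β α : ℝ)
    (hσ : 0 < σ) (hr : 0 ≤ r) (hK : 0 ≤ K) (hT : 0 < T)
    (hβ : σ ^ 2 / 2 + r + 1 ≤ β) (hα : Real.exp (β * T) ≤ α) :
    (∀ t ∈ Set.Ioo (0 : ℝ) T, ∀ s a : ℝ, 0 < s → 0 < a →
      max
        (σ ^ 2 * s ^ 2 / 2 *
            deriv (fun y => deriv (fun z => ubar α β t z a) y) s
          + r * s * deriv (fun z => ubar α β t z a) s
          + s * deriv (fun w => ubar α β t s w) a
          + deriv (fun τ => ubar α β τ s a) t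
          - r * ubar α β t s a)
        (max (a / t - K) 0 - ubar α β t s a) ≤ 0) ∧
    (∀ s a : ℝ, 0 < s → 0 < a → max (a / T - K) 0 ≤ ubar α β T s a) :=
  ubar_supersolution_obstacle_general σ r K T β α hr hK hT hβ hα
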